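/- arXiv:1810.11534 — 3 statements merged into one kernel-verified Lean document; each statement's English description precedes it below -/
import Mathlib

section
/- Let σ : ℝ → ℝ be a saturation function with linear bound L and saturation bound M (0 < L ≤ M). If x : ℝ → ℝ is differentiable and satisfies x'(t) = -σ(x(t)) for all t ≥ 0, then x(t) → 0 as t → ∞. -/
open Filter Real Set

/-- A saturation function with linear bound `L` and saturation bound `M`. -/
def IsSaturation (L M : ℝ) (σ : ℝ → ℝ) : Prop :=
  Continuous σ ∧ Monotone σ ∧ (∀ s : ℝ, s ≠ 0 → 0 < s * σ s) ∧
  (∀ s : ℝ, |σ s| ≤ M) ∧ (∀ s : ℝ, |s| ≤ L → σ s = s)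

theorem tendsto_zero_of_saturation_ode
    (L M : ℝ) (hL : 0 < L) (hLM : L ≤ M) (σ : ℝ → ℝ) (hσ : IsSaturation L M σ)
    (x : ℝ → ℝ) (hx : Differentiable ℝ x)
    (hode : ∀ t : ℝ, 0 ≤ t → deriv x t = -σ (x t)) :
    Filter.Tendsto x Filter.atTop (nhds 0) := by
  obtain ⟨hc, hmono, hsign, hM, hlin⟩ := hσ
  have hσ0 : σ 0 = 0 := by simpa using hlin 0 (by simp [hL.le])
  have hsign' : ∀ s : ℝ, 0 ≤ s * σ s := by
    intro s
    rcases eq_or_ne s 0 with rfl | h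
    · simp [hσ0]
    · exact (hsign s h).le
  set f : ℝ → ℝ := fun t => x t ^ 2 with hfdef
  have hfdiff : Differentiable ℝ f := fun t => ((hx t).pow 2)
  have hfderiv : ∀ t : ℝ, 0 ≤ t → deriv f t = -(2 * (x t * σ (x t))) := by
    intro t ht
    have h1 : HasDerivAt f (2 * x t ^ 1 * deriv x t) t := ((hx t).hasDerivAt).pow 2
    rw [hode t ht] at h1
    rw [h1.deriv]; ring
  -- key estimate: away from 0, s * σ s is bounded below
  have key : ∀ a : ℝ, 0 < a → ∀ s : ℝ, a ≤ |s| → a * min a L ≤ s * σ s := by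
    intro a ha s hs
    have hm0 : 0 < min a L := lt_min ha hL
    have hmabs : |min a L| ≤ L := by
      rw [abs_of_pos hm0]; exact min_le_right _ _
    have hm : σ (min a L) = min a L := hlin _ hmabs
    have hm' : σ (-(min a L)) = -(min a L) := hlin _ (by rwa [abs_neg])
    rcases le_abs.mp hs with h1 | h1
    · have hσs : min a L ≤ σ s := by
        rw [← hm]; exact hmono ((min_le_left _ _).trans h1)
      exact mul_le_mul h1 hσs hm0.le (ha.trans_le h1).le
    · have hs' : s ≤ -(min a L) := by
        have := min_le_left a L; linarith
      have hσs : σ s ≤ -(min a L) := by rw [← hm']; exact hmono hs'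
      have : a * min a L ≤ (-s) * (-σ s) :=
        mul_le_mul (by linarith) (by linarith) hm0.le (by linarith)
      calc a * min a L ≤ (-s) * (-σ s) := this
        _ = s * σ s := by ring
  have hfant : AntitoneOn f (Ici 0) := by
    apply antitoneOn_of_deriv_nonpos (convex_Ici 0) hfdiff.continuous.continuousOn
      hfdiff.differentiableOn
    intro t ht
    rw [interior_Ici] at ht
    rw [hfderiv t ht.le]
    have := hsign' (x t)
    linarith
  set F : ℝ → ℝ := fun t => f (max t 0) with hFdef
  have hFant : Antitone F := by
    intro s t hst
    exact hfant (le_max_right s 0) (le_max_right t 0) (max_le_max hst le_rfl)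
  have hFbdd : BddBelow (Set.range F) := by
    refine ⟨0, ?_⟩
    rintro y ⟨t, rfl⟩
    exact sq_nonneg _
  set c := ⨅ t, F t with hcdef
  have htends : Filter.Tendsto F atTop (nhds c) := tendsto_atTop_ciInf hFant hFbdd
  have hc0 : 0 ≤ c := le_ciInf fun t => sq_nonneg _
  have hfc : ∀ t : ℝ, 0 ≤ t → c ≤ f t := by
    intro t ht
    have := ciInf_le hFbdd t
    rwa [show F t = f t by simp [hFdef, max_eq_left ht]] at this
  have hceq : c = 0 := by
    by_contra hne
    have hcpos : 0 < c := lt_of_le_of_ne hc0 (Ne.symm hne)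
    set a := Real.sqrt c with hadef
    have ha : 0 < a := Real.sqrt_pos.mpr hcpos
    set δ := a * min a L with hδdef
    have hδpos : 0 < δ := mul_pos ha (lt_min ha hL)
    have habs : ∀ t : ℝ, 0 ≤ t → a ≤ |x t| := by
      intro t ht
      calc a = Real.sqrt c := rfl
        _ ≤ Real.sqrt (x t ^ 2) := Real.sqrt_le_sqrt (hfc t ht)
        _ = |x t| := Real.sqrt_sq_eq_abs _
    set g : ℝ → ℝ := fun t => f t + 2 * δ * t with hgdef
    have hgdiff : Differentiable ℝ g := hfdiff.add (by fun_prop)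
    have hgant : AntitoneOn g (Ici 0) := by
      apply antitoneOn_of_deriv_nonpos (convex_Ici 0) hgdiff.continuous.continuousOn
        hgdiff.differentiableOn
      intro t ht
      rw [interior_Ici] at ht
      have h1 : HasDerivAt g (deriv f t + 2 * δ * 1) t :=
        ((hfdiff t).hasDerivAt).add ((hasDerivAt_id t).const_mul (2 * δ))
      rw [h1.deriv, hfderiv t ht.le]
      have := key a ha (x t) (habs t ht.le)
      nlinarith
    have h0 : 0 ≤ f 0 := sq_nonneg _
    set T := f 0 / (2 * δ) + 1 with hTdef
    have hT : 0 ≤ T := by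
      have h2 : 0 ≤ f 0 / (2 * δ) := div_nonneg h0 (by positivity)
      rw [hTdef]; linarith
    have hgT : g T ≤ g 0 := hgant self_mem_Ici hT hT
    have hTe : 2 * δ * T = f 0 + 2 * δ := by
      rw [hTdef]; field_simp
    have hgT' : f T + (f 0 + 2 * δ) ≤ f 0 + 0 := by
      rw [← hTe]
      simpa [hgdef] using hgT
    have := hfc T hT
    linarith
  have htendf : Filter.Tendsto f atTop (nhds 0) := by
    rw [← hceq]
    refine htends.congr' ?_
    filter_upwards [eventually_ge_atTop (0:ℝ)] with t ht
    simp [hFdef, max_eq_left ht]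
  have habsx : Filter.Tendsto (fun t => |x t|) atTop (nhds 0) := by
    have h1 : Filter.Tendsto (fun t => Real.sqrt (f t)) atTop (nhds (Real.sqrt 0)) :=
      (Real.continuous_sqrt.tendsto 0).comp htendf
    simpa [hfdef, Real.sqrt_sq_eq_abs] using h1
  have hneg : Filter.Tendsto (fun t => -|x t|) atTop (nhds 0) := by
    simpa using habsx.neg
  exact tendsto_of_tendsto_of_tendsto_of_le_of_le hneg habsx
    (fun t => neg_abs_le _) (fun t => le_abs_self _)
end

section
/- Let 0 < L_u < M_u and 0 < L_α < M_α with M_α < π/2, let u_d and α_d be the continuously differentiable reference functions defined by u_d(t) = t/5 for t/5 ≤ L_u, u_d(t) = arctan(a_u(t/5 - L_u))/a_u + L_u for t/5 > L_u (with a_u = π/(2(M_u - L_u))), and α_d(t) = t for t ≤ L_α, α_d(t) = arctan(a_α(t - L_α))/a_α + L_α for t > L_α (with a_α = π/(2(M_α - L_α))). Then the desired vertical body velocity w_d(t) = u_d(t)·tan(α_d(t)) is continuously differentiable on [0, ∞) and satisfies 0 ≤ w_d(t) < M_u·tan(M_α) for all t ≥ 0. -/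
/-!
Both references are instances of one profile: the identity up to a level `L`, continued by
`arctan (a (x - L)) / a + L`. The two pieces agree to first order at `L`, so the profile is `C¹`,
and it increases from `min x L` towards its supremum `L + π / (2a) = M`. Hence `u_d` takes values
in `[0, M_u)` and `α_d` in `[0, M_α) ⊆ [0, π/2)`, where `tan` is smooth, nonnegative and strictly
increasing, and `w_d = u_d · tan α_d` inherits regularity and bounds from its factors.
-/

open Real

theorem hasDerivAt_ite_le {f g f' g' : ℝ → ℝ} {c : ℝ}
    (hf : ∀ x, HasDerivAt f (f' x) x) (hg : ∀ x, HasDerivAt g (g' x) x)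
    (hc : f c = g c) (hc' : f' c = g' c) (x : ℝ) :
    HasDerivAt (fun y => if y ≤ c then f y else g y) (if x ≤ c then f' x else g' x) x := by
  rcases lt_trichotomy x c with hx | rfl | hx
  · rw [if_pos hx.le]
    refine (hf x).congr_of_eventuallyEq ?_
    filter_upwards [Iio_mem_nhds hx] with y hy
    exact if_pos (Set.mem_Iio.mp hy).le
  · have hleft : HasDerivWithinAt (fun y => if y ≤ x then f y else g y) (f' x) (Set.Iic x) x :=
      (hf x).hasDerivWithinAt.congr (fun y hy => if_pos hy) (if_pos le_rfl)
    have hright : HasDerivWithinAt (fun y => if y ≤ x then f y else g y) (f' x) (Set.Ici x) x := by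
      rw [hc']
      refine (hg x).hasDerivWithinAt.congr (fun y hy => ?_) (by simp [hc])
      rcases (Set.mem_Ici.mp hy).eq_or_lt with rfl | hxy
      · simp [hc]
      · exact if_neg hxy.not_ge
    rw [if_pos le_rfl, ← hasDerivWithinAt_univ, ← Set.Iic_union_Ici]
    exact hleft.union hright
  · rw [if_neg hx.not_ge]
    refine (hg x).congr_of_eventuallyEq ?_
    filter_upwards [Ioi_mem_nhds hx] with y hy
    exact if_neg (Set.mem_Ioi.mp hy).not_ge

theorem contDiff_one_ite_le {f g f' g' : ℝ → ℝ} {c : ℝ}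
    (hf : ∀ x, HasDerivAt f (f' x) x) (hg : ∀ x, HasDerivAt g (g' x) x)
    (hf' : Continuous f') (hg' : Continuous g') (hc : f c = g c) (hc' : f' c = g' c) :
    ContDiff ℝ 1 (fun y => if y ≤ c then f y else g y) := by
  have hderiv := hasDerivAt_ite_le hf hg hc hc'
  rw [contDiff_one_iff_deriv]
  refine ⟨fun x => (hderiv x).differentiableAt, ?_⟩
  rw [funext fun x => (hderiv x).deriv]
  exact hf'.if_le hg' continuous_id continuous_const fun x hx => hx ▸ hc'

theorem hasDerivAt_arctan_mul_sub_div {a : ℝ} (ha : a ≠ 0) (L x : ℝ) :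
    HasDerivAt (fun y => arctan (a * (y - L)) / a + L) (1 / (1 + (a * (x - L)) ^ 2)) x := by
  have h := ((((hasDerivAt_id x).sub_const L).const_mul a).arctan.div_const a).add_const L
  refine h.congr_deriv ?_
  simp [ha]

/-- The slope `π / (2 (M - L))` makes the arctangent branch leave `L` with slope `1` and
approach `M` from below. -/
noncomputable def arctanSaturation (L M x : ℝ) : ℝ :=
  if x ≤ L then x else arctan (π / (2 * (M - L)) * (x - L)) / (π / (2 * (M - L))) + L

section arctanSaturation

variable {L M : ℝ}

theorem contDiff_arctanSaturation (hLM : L ≠ M) : ContDiff ℝ 1 (arctanSaturation L M) := by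
  have ha : π / (2 * (M - L)) ≠ 0 :=
    div_ne_zero pi_ne_zero (mul_ne_zero two_ne_zero (sub_ne_zero.mpr hLM.symm))
  refine contDiff_one_ite_le (fun x => hasDerivAt_id x) (hasDerivAt_arctan_mul_sub_div ha L)
    continuous_const ?_ (by simp) (by simp)
  exact continuous_const.div (by fun_prop) fun x => by positivity

theorem min_le_arctanSaturation (hLM : L < M) (x : ℝ) : min x L ≤ arctanSaturation L M x := by
  unfold arctanSaturation
  split_ifs with hx
  · exact min_le_left x L
  · have ha : 0 < π / (2 * (M - L)) := div_pos pi_pos (by linarith)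
    have : 0 ≤ arctan (π / (2 * (M - L)) * (x - L)) / (π / (2 * (M - L))) :=
      div_nonneg (arctan_nonneg.mpr (by nlinarith)) ha.le
    linarith [min_le_right x L]

theorem arctanSaturation_lt (hLM : L < M) (x : ℝ) : arctanSaturation L M x < M := by
  unfold arctanSaturation
  split_ifs with hx
  · exact hx.trans_lt hLM
  · have ha : 0 < π / (2 * (M - L)) := div_pos pi_pos (by linarith)
    have : arctan (π / (2 * (M - L)) * (x - L)) / (π / (2 * (M - L))) < M - L := by
      calc _ < (π / 2) / (π / (2 * (M - L))) := by gcongr; exact arctan_lt_pi_div_two _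
        _ = M - L := by field_simp
    linarith

end arctanSaturation

theorem wd_reference_properties
    (Lu Mu Lα Mα : ℝ) (hLu : 0 < Lu) (hLuMu : Lu < Mu)
    (hLα : 0 < Lα) (hLαMα : Lα < Mα) (hMα : Mα < Real.pi / 2) :
    let au : ℝ := Real.pi / (2 * (Mu - Lu))
    let aα : ℝ := Real.pi / (2 * (Mα - Lα))
    let ud : ℝ → ℝ := fun t =>
      if t / 5 ≤ Lu then t / 5 else Real.arctan (au * (t / 5 - Lu)) / au + Lu
    let αd : ℝ → ℝ := fun t =>
      if t ≤ Lα then t else Real.arctan (aα * (t - Lα)) / aα + Lα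
    let wd : ℝ → ℝ := fun t => ud t * Real.tan (αd t)
    ContDiffOn ℝ 1 wd (Set.Ici (0 : ℝ)) ∧
    (∀ t : ℝ, 0 ≤ t → 0 ≤ wd t ∧ wd t < Mu * Real.tan Mα) := by
  intro au aα ud αd wd
  have hud : ud = fun t => arctanSaturation Lu Mu (t / 5) := rfl
  have hαd : αd = arctanSaturation Lα Mα := rfl
  have hud_bounds (t : ℝ) (ht : 0 ≤ t) : 0 ≤ ud t ∧ ud t < Mu :=
    ⟨(le_min (by positivity) hLu.le).trans (min_le_arctanSaturation hLuMu _),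
      arctanSaturation_lt hLuMu _⟩
  have hαd_bounds (t : ℝ) (ht : 0 ≤ t) : 0 ≤ αd t ∧ αd t < Mα :=
    ⟨(le_min ht hLα.le).trans (min_le_arctanSaturation hLαMα _), arctanSaturation_lt hLαMα _⟩
  have hud_cd : ContDiff ℝ 1 ud :=
    hud ▸ (contDiff_arctanSaturation hLuMu.ne).comp (contDiff_id.div_const 5)
  have hαd_cd : ContDiff ℝ 1 αd := hαd ▸ contDiff_arctanSaturation hLαMα.ne
  refine ⟨fun t ht => ContDiffAt.contDiffWithinAt ?_, fun t ht => ?_⟩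
  · obtain ⟨hα₀, hαM⟩ := hαd_bounds t ht
    have hcos : cos (αd t) ≠ 0 := (cos_pos_of_mem_Ioo ⟨by linarith [pi_pos], by linarith⟩).ne'
    exact hud_cd.contDiffAt.mul ((contDiffAt_tan.mpr hcos).comp t hαd_cd.contDiffAt)
  · obtain ⟨hu₀, huM⟩ := hud_bounds t ht
    obtain ⟨hα₀, hαM⟩ := hαd_bounds t ht
    have htan₀ : 0 ≤ tan (αd t) := tan_nonneg_of_nonneg_of_le_pi_div_two hα₀ (by linarith)
    exact ⟨mul_nonneg hu₀ htan₀,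
      mul_lt_mul'' huM (tan_lt_tan_of_nonneg_of_lt_pi_div_two hα₀ hMα hαM) hu₀ htan₀⟩
end

section
/- Let g > 0, let σ₃ : ℝ → ℝ be a saturation function with linear bound L₃ and saturation bound M₃ (0 < L₃ ≤ M₃), let f₁ : ℝ → ℝ be continuous, let ε : ℝ → ℝ satisfy |ε(t)| ≤ 1 for all t, let u_d : ℝ → ℝ be continuously differentiable, and let u : ℝ → ℝ be differentiable satisfying u'(t) = f₁(t) + T(t) - g·√(1 - ε(t)²) for all t ≥ 0, where T(t) = -σ₃(u(t) - u_d(t)) + g·√(1 - ε(t)²) - f₁(t) + u_d'(t). Then the tracking error x₁ = u - u_d satisfies x₁'(t) = -σ₃(x₁(t)) for all t ≥ 0, and consequently u(t) - u_d(t) → 0 as t → ∞. -/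
/-!
The thrust law cancels the aerodynamic and gravity terms, so the tracking error
`x = u - u_d` obeys `x' = -σ₃(x)`. Along this flow `x²` is nonincreasing, since
`x σ₃(x) ≥ 0`. While `|x| > r` (with `0 < r ≤ L₃`) monotonicity of `σ₃` gives
`x σ₃(x) ≥ r²`, so `x²` drops at rate at least `2r²`; hence `|x|` falls below `r`
in finite time and stays there.
-/

open Real Filter

open Set

namespace IsSaturation

variable {L M : ℝ} {σ : ℝ → ℝ}

theorem map_zero (hσ : IsSaturation L M σ) (hL : 0 ≤ L) : σ 0 = 0 :=
  hσ.2.2.2.2 0 (by simpa using hL)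

theorem self_mul_apply_nonneg (hσ : IsSaturation L M σ) (hL : 0 ≤ L) (s : ℝ) :
    0 ≤ s * σ s := by
  rcases eq_or_ne s 0 with rfl | hs
  · simp [hσ.map_zero hL]
  · exact (hσ.2.2.1 s hs).le

theorem sq_le_self_mul_apply (hσ : IsSaturation L M σ) {r s : ℝ} (hr : 0 ≤ r) (hrL : r ≤ L)
    (hrs : r ≤ |s|) : r ^ 2 ≤ s * σ s := by
  have hσr : σ r = r := hσ.2.2.2.2 r (by rwa [abs_of_nonneg hr])
  have hσnr : σ (-r) = -r := hσ.2.2.2.2 (-r) (by rwa [abs_neg, abs_of_nonneg hr])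
  rcases le_abs'.mp hrs with hs | hs
  · have : σ s ≤ -r := hσnr ▸ hσ.2.1 (by linarith : s ≤ -r)
    nlinarith
  · have : r ≤ σ s := hσr ▸ hσ.2.1 hs
    nlinarith

end IsSaturation

section ErrorDynamics

variable {x : ℝ → ℝ}

theorem antitoneOn_sq_add_of_mul_deriv_le (hx : Differentiable ℝ x) {a c : ℝ}
    (h : ∀ t, a < t → x t * deriv x t ≤ -c) :
    AntitoneOn (fun t => x t ^ 2 + 2 * c * t) (Ici a) := by
  have hV : ∀ t, HasDerivAt (fun t => x t ^ 2 + 2 * c * t) (2 * x t * deriv x t + 2 * c) t :=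
    fun t => by
      simpa using ((hx t).hasDerivAt.fun_pow 2).fun_add ((hasDerivAt_id' t).const_mul (2 * c))
  have hdiff : Differentiable ℝ (fun t => x t ^ 2 + 2 * c * t) := fun t => (hV t).differentiableAt
  refine antitoneOn_of_deriv_nonpos (convex_Ici a) hdiff.continuous.continuousOn
    hdiff.differentiableOn fun t ht => ?_
  rw [interior_Ici] at ht
  rw [(hV t).deriv]
  linarith [h t ht]

variable {L M : ℝ} {σ : ℝ → ℝ}

theorem antitoneOn_sq_of_deriv_eq_neg_saturation (hx : Differentiable ℝ x)
    (hσ : IsSaturation L M σ) (hL : 0 ≤ L) (hode : ∀ t, 0 ≤ t → deriv x t = -σ (x t)) :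
    AntitoneOn (fun t => x t ^ 2) (Ici 0) := by
  simpa using antitoneOn_sq_add_of_mul_deriv_le (c := 0) hx fun t ht => by
    rw [hode t ht.le, mul_neg, neg_zero, neg_nonpos]
    exact hσ.self_mul_apply_nonneg hL _

theorem exists_abs_le_of_deriv_eq_neg_saturation (hx : Differentiable ℝ x)
    (hσ : IsSaturation L M σ) (hode : ∀ t, 0 ≤ t → deriv x t = -σ (x t)) {r : ℝ}
    (hr : 0 < r) (hrL : r ≤ L) : ∃ t₀, 0 ≤ t₀ ∧ |x t₀| ≤ r := by
  by_contra! hfar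
  have hanti := antitoneOn_sq_add_of_mul_deriv_le (a := 0) (c := r ^ 2) hx fun t ht => by
    rw [hode t ht.le, mul_neg, neg_le_neg_iff]
    exact hσ.sq_le_self_mul_apply hr.le hrL (hfar t ht.le).le
  -- at this time the decrease `2 r² t` would exhaust all of `x 0 ^ 2`
  set t₀ := x 0 ^ 2 / (2 * r ^ 2)
  have ht₀ : 0 ≤ t₀ := by positivity
  have hdrop : x t₀ ^ 2 + 2 * r ^ 2 * t₀ ≤ x 0 ^ 2 := by
    simpa using hanti self_mem_Ici ht₀ ht₀
  have hzero : x t₀ = 0 := by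
    have : 2 * r ^ 2 * t₀ = x 0 ^ 2 := by simp only [t₀]; field_simp
    nlinarith [sq_nonneg (x t₀)]
  linarith [hfar t₀ ht₀, abs_eq_zero.mpr hzero]

theorem tendsto_zero_of_deriv_eq_neg_saturation (hx : Differentiable ℝ x)
    (hσ : IsSaturation L M σ) (hL : 0 < L) (hode : ∀ t, 0 ≤ t → deriv x t = -σ (x t)) :
    Tendsto x atTop (nhds 0) := by
  refine Metric.tendsto_atTop.mpr fun δ hδ => ?_
  obtain ⟨t₀, ht₀, hsmall⟩ := exists_abs_le_of_deriv_eq_neg_saturation hx hσ hode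
    (lt_min (half_pos hδ) hL) (min_le_right _ _)
  refine ⟨t₀, fun t ht => ?_⟩
  have hsq : x t ^ 2 ≤ x t₀ ^ 2 :=
    antitoneOn_sq_of_deriv_eq_neg_saturation hx hσ hL.le hode ht₀ (ht₀.trans ht) ht
  rw [Real.dist_eq, sub_zero]
  calc |x t| ≤ |x t₀| := sq_le_sq.mp hsq
    _ ≤ min (δ / 2) L := hsmall
    _ < δ := (min_le_left _ _).trans_lt (half_lt_self hδ)

end ErrorDynamics

theorem thrust_controller_tracking_general
    (g : ℝ)
    (L₃ M₃ : ℝ) (hL₃ : 0 < L₃)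
    (σ₃ : ℝ → ℝ) (hσ₃ : IsSaturation L₃ M₃ σ₃)
    (f₁ : ℝ → ℝ)
    (ε : ℝ → ℝ)
    (ud : ℝ → ℝ) (hud : ContDiff ℝ 1 ud)
    (u : ℝ → ℝ) (hu : Differentiable ℝ u)
    (T : ℝ → ℝ)
    (hT : ∀ t : ℝ, T t = -σ₃ (u t - ud t) + g * Real.sqrt (1 - ε t ^ 2)
        - f₁ t + deriv ud t)
    (hode : ∀ t : ℝ, 0 ≤ t →
        deriv u t = f₁ t + T t - g * Real.sqrt (1 - ε t ^ 2)) :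
    (∀ t : ℝ, 0 ≤ t →
        deriv (fun s => u s - ud s) t = -σ₃ (u t - ud t)) ∧
    Tendsto (fun t => u t - ud t) atTop (nhds 0) := by
  have hud' : Differentiable ℝ ud := hud.differentiable one_ne_zero
  have herror : ∀ t : ℝ, 0 ≤ t → deriv (fun s => u s - ud s) t = -σ₃ (u t - ud t) := by
    intro t ht
    rw [deriv_fun_sub (hu t) (hud' t), hode t ht, hT t]
    ring
  exact ⟨herror, tendsto_zero_of_deriv_eq_neg_saturation (hu.sub hud') hσ₃ hL₃ herror⟩

theorem thrust_controller_tracking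
    (g : ℝ) (hg : 0 < g)
    (L₃ M₃ : ℝ) (hL₃ : 0 < L₃) (hLM₃ : L₃ ≤ M₃)
    (σ₃ : ℝ → ℝ) (hσ₃ : IsSaturation L₃ M₃ σ₃)
    (f₁ : ℝ → ℝ) (hf₁ : Continuous f₁)
    (ε : ℝ → ℝ) (hε : ∀ t : ℝ, |ε t| ≤ 1)
    (ud : ℝ → ℝ) (hud : ContDiff ℝ 1 ud)
    (u : ℝ → ℝ) (hu : Differentiable ℝ u)
    (T : ℝ → ℝ)
    (hT : ∀ t : ℝ, T t = -σ₃ (u t - ud t) + g * Real.sqrt (1 - ε t ^ 2)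
        - f₁ t + deriv ud t)
    (hode : ∀ t : ℝ, 0 ≤ t →
        deriv u t = f₁ t + T t - g * Real.sqrt (1 - ε t ^ 2)) :
    (∀ t : ℝ, 0 ≤ t →
        deriv (fun s => u s - ud s) t = -σ₃ (u t - ud t)) ∧
    Tendsto (fun t => u t - ud t) atTop (nhds 0) :=
  thrust_controller_tracking_general g L₃ M₃ hL₃ σ₃ hσ₃ f₁ ε ud hud u hu T hT hode
end
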